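/- Let ρ_j (j ∈ ℤ₊) be positive integers and ψ^m_j ∈ L₂ for m = 1,…,ρ_j. The family Ψ = {S^k_j ψ^m_j : j ∈ ℤ₊, m = 1,…,ρ_j, k ∈ R_j} forms a Parseval wavelet frame in L₂ if and only if (i) Σ_{j=0}^∞ Σ_{m=1}^{ρ_j} 2^j |ψ̂^m_j(n)|² = 1 for every n ∈ ℤ, and (ii) Σ_{q=0}^{j} 2^q Σ_{m=1}^{ρ_q} conj(ψ̂^m_q(n)) · ψ̂^m_q(2^j k + n) = 0 for every odd integer k, every n ∈ ℤ and every j ∈ ℤ₊. -/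

import Mathlib

open MeasureTheory Complex Finset Filter ComplexConjugate

noncomputable section

instance : Fact ((0:ℝ) < 1) := ⟨one_pos⟩

/-- The space `L₂` of 1-periodic square-integrable complex functions, realized as
`Lp ℂ 2` over the additive circle of length 1 with normalized Haar measure. -/
abbrev PL2 : Type := Lp ℂ 2 (@AddCircle.haarAddCircle (1 : ℝ) _)

/-- Fourier coefficient `f̂(n) = ∫₀¹ f(x) e^{-2πinx} dx`. -/
def fCoeff (f : PL2) (n : ℤ) : ℂ := fourierCoeff (f : AddCircle (1 : ℝ) → ℂ) n

/-- Inner product `⟨f, S^k_j g⟩ = ∫₀¹ f(x) conj(g(x + 2^{-j} k)) dx`. -/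
def shiftInner (f g : PL2) (j : ℕ) (k : ℤ) : ℂ :=
  ∫ x : AddCircle (1 : ℝ),
    f x * conj (g (x + (((2:ℝ)^(-(j:ℤ)) * (k:ℝ) : ℝ) : AddCircle (1 : ℝ))))
    ∂AddCircle.haarAddCircle

/-- `R_j = {-2^{j-1}+1, …, 2^{j-1}}` for `j ≥ 1` and `R₀ = {0}`. -/
def Rset (j : ℕ) : Finset ℤ :=
  if j = 0 then {0} else Finset.Icc (-(2^(j-1) : ℤ) + 1) (2^(j-1))

/-- The system `{S^k_j ψ^m_j : j ∈ ℤ₊, 1 ≤ m ≤ ρ_j, k ∈ R_j}` is a Parseval wavelet frame. -/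
def IsParsevalFrame (ρ : ℕ → ℕ) (ψ : ℕ → ℕ → PL2) : Prop :=
  ∀ f : PL2, ‖f‖^2 =
    ∑' j : ℕ, ∑ m ∈ Finset.Icc 1 (ρ j), ∑ k ∈ Rset j,
      (‖shiftInner f (ψ j m) j k‖)^2

/-!
For any family `(g i)` in a Hilbert space with Hilbert basis `(e n)`, Parseval's identity
`∑ i, ‖⟪g i, f⟫‖² = ‖f‖²` holds for all `f` iff `∑ i, ⟪e n, g i⟫ ⟪g i, e n'⟫ = δ n n'`. One
direction is polarization; for the other, the vectors `(⟪g i, e n⟫)ᵢ` are then orthonormal in `ℓ²`,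
so `e n ↦ (⟪g i, e n⟫)ᵢ` extends to an isometry whose coordinates are `⟪g i, ·⟫`.

For the trigonometric basis and `g = S^k_j ψ^m_j`, the shifts `k ∈ R_j` form a complete residue
system mod `2^j`, so the `j`-th block of that series is
`2^j [2^j ∣ n - n'] ∑ m, ψ̂^m_j(n) conj (ψ̂^m_j(n'))`. For `n = n'` this gives (i); for
`n - n' = 2^j k` with `k` odd only the blocks `q ≤ j` survive, which gives (ii). Summing block by
block is legitimate because (i) makes the series absolutely convergent, by
`|a b| ≤ (|a|² + |b|²) / 2`.
-/

open scoped InnerProductSpace lp Real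

section ParsevalFrame

variable {𝕜 E ι κ : Type*} [RCLike 𝕜] [NormedAddCommGroup E] [InnerProductSpace 𝕜 E]

theorem hasSum_inner_mul_inner_of_hasSum_norm_sq {g : κ → E}
    (h : ∀ f, HasSum (fun i => ‖⟪g i, f⟫_𝕜‖ ^ 2) (‖f‖ ^ 2)) (x y : E) :
    HasSum (fun i => ⟪x, g i⟫_𝕜 * ⟪g i, y⟫_𝕜) ⟪x, y⟫_𝕜 := by
  have hK : ∀ z : E, HasSum (fun i => (‖⟪g i, z⟫_𝕜‖ : 𝕜) ^ 2) ((‖z‖ : 𝕜) ^ 2) := fun z => by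
    exact_mod_cast (RCLike.hasSum_ofReal 𝕜).2 (h z)
  -- polarization, once in `E` and once in `𝕜`
  rw [inner_eq_sum_norm_sq_div_four x y]
  convert (((hK (x + y)).sub (hK (x - y))).add
    (((hK (x - RCLike.I • y)).sub (hK (x + RCLike.I • y))).mul_right RCLike.I)).div_const 4 using 2
    with i
  rw [← inner_conj_symm, mul_comm, ← RCLike.inner_apply, inner_eq_sum_norm_sq_div_four (𝕜 := 𝕜)]
  simp only [inner_add_right, inner_sub_right, inner_smul_right, smul_eq_mul]

variable [DecidableEq ι]

theorem exists_linearIsometry_apply_eq_inner (b : HilbertBasis ι 𝕜 E) {g : κ → E}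
    (h : ∀ n n', HasSum (fun i => ⟪b n, g i⟫_𝕜 * ⟪g i, b n'⟫_𝕜) (if n = n' then 1 else 0)) :
    ∃ W : E →ₗᵢ[𝕜] ℓ²(κ, 𝕜), ∀ f i, W f i = ⟪g i, f⟫_𝕜 := by
  have hmem : ∀ n, Memℓp (fun i => ⟪g i, b n⟫_𝕜) 2 := fun n => by
    refine memℓp_gen ?_
    have hn : HasSum (fun i => ((‖⟪g i, b n⟫_𝕜‖ ^ 2 : ℝ) : 𝕜)) ((1 : ℝ) : 𝕜) := by
      simpa only [← inner_conj_symm (b n), RCLike.conj_mul, if_true, RCLike.ofReal_pow,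
        RCLike.ofReal_one] using h n n
    simpa using ((RCLike.hasSum_ofReal 𝕜).1 hn).summable
  let U : ι → ℓ²(κ, 𝕜) := fun n => ⟨_, hmem n⟩
  have hU : Orthonormal 𝕜 U := by
    rw [orthonormal_iff_ite]
    intro n n'
    refine (lp.hasSum_inner (U n) (U n')).unique ?_
    convert h n n' using 2 with i
    simp [U, RCLike.inner_apply, inner_conj_symm, mul_comm]
  refine ⟨hU.orthogonalFamily.linearIsometry.comp b.repr.toLinearIsometry, fun f i => ?_⟩
  refine ((hU.orthogonalFamily.hasSum_linearIsometry (b.repr f)).mapL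
    (lp.evalCLM 𝕜 (fun _ => 𝕜) 2 i)).unique ?_
  simpa [U, lp.evalCLM, b.repr_apply_apply, mul_comm] using b.hasSum_inner_mul_inner (g i) f

theorem hasSum_norm_sq_inner_iff (b : HilbertBasis ι 𝕜 E) (g : κ → E) :
    (∀ f, HasSum (fun i => ‖⟪g i, f⟫_𝕜‖ ^ 2) (‖f‖ ^ 2)) ↔
      ∀ n n', HasSum (fun i => ⟪b n, g i⟫_𝕜 * ⟪g i, b n'⟫_𝕜) (if n = n' then 1 else 0) := by
  refine ⟨fun h n n' => ?_, fun h f => ?_⟩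
  · rw [← orthonormal_iff_ite.1 b.orthonormal]
    exact hasSum_inner_mul_inner_of_hasSum_norm_sq h _ _
  · obtain ⟨W, hW⟩ := exists_linearIsometry_apply_eq_inner b h
    simpa [hW, W.norm_map] using lp.hasSum_norm (p := 2) (by norm_num) (W f)

end ParsevalFrame

theorem summable_mul_of_summable_norm_sq {𝕜 κ : Type*} [RCLike 𝕜] {f g : κ → 𝕜}
    (hf : Summable fun i => ‖f i‖ ^ 2) (hg : Summable fun i => ‖g i‖ ^ 2) :
    Summable fun i => f i * g i :=
  .of_norm_bounded ((hf.add hg).div_const 2) fun i => by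
    rw [norm_mul]
    nlinarith [sq_nonneg (‖f i‖ - ‖g i‖)]

theorem Finset.sum_coe_sort_prod {α β M : Type*} [AddCommMonoid M] (s : Finset α) (t : Finset β)
    (F : α → β → M) : ∑ x : s × t, F x.1 x.2 = ∑ a ∈ s, ∑ b ∈ t, F a b := by
  rw [Fintype.sum_prod_type, ← sum_coe_sort s]
  simp_rw [← sum_coe_sort t]

section Sigma

variable {β : Type*} {γ : β → Type*} [∀ b, Fintype (γ b)]

theorem hasSum_sigma_iff_of_nonneg {f : (Σ b, γ b) → ℝ} (hf : 0 ≤ f) {a : ℝ} :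
    HasSum f a ↔ HasSum (fun b => ∑ c, f ⟨b, c⟩) a := by
  refine ⟨fun h => h.sigma fun b => hasSum_fintype _, fun h => ?_⟩
  have hs : Summable f := (summable_sigma_of_nonneg hf).2
    ⟨fun _ => .of_finite, by simpa only [tsum_fintype] using h.summable⟩
  exact (hs.hasSum.sigma fun b => hasSum_fintype _).unique h ▸ hs.hasSum

theorem Summable.hasSum_iff_tsum_sum_sigma {E : Type*} [NormedAddCommGroup E] [CompleteSpace E]
    {f : (Σ b, γ b) → E} (hf : Summable f) {a : E} :
    HasSum f a ↔ ∑' b, ∑ c, f ⟨b, c⟩ = a := by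
  simp only [hf.hasSum_iff, hf.tsum_sigma, tsum_fintype]

end Sigma

theorem Int.two_pow_dvd_two_pow_mul_odd_iff {k : ℤ} (hk : Odd k) {i j : ℕ} :
    (2 : ℤ) ^ i ∣ 2 ^ j * k ↔ i ≤ j := by
  refine ⟨fun h => ?_, fun h => (pow_dvd_pow 2 h).mul_right k⟩
  by_contra! hji
  have h2k : (2 : ℤ) ^ j * 2 ∣ 2 ^ j * k := by
    rw [← pow_succ]
    exact (pow_dvd_pow 2 hji).trans h
  rw [mul_dvd_mul_iff_left (by positivity), ← even_iff_two_dvd] at h2k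
  exact Int.not_even_iff_odd.2 hk h2k

theorem Int.exists_eq_two_pow_mul_odd {d : ℤ} (hd : d ≠ 0) : ∃ j k, Odd k ∧ d = 2 ^ j * k := by
  obtain ⟨j, m, hm, hdm⟩ := Nat.exists_eq_two_pow_mul_odd (Int.natAbs_ne_zero.2 hd)
  rcases Int.natAbs_eq d with h | h
  · exact ⟨j, m, by exact_mod_cast hm.natCast, by rw [h, hdm]; push_cast; ring⟩
  · exact ⟨j, -m, (hm.natCast (R := ℤ)).neg, by rw [h, hdm]; push_cast; ring⟩

theorem fourierCoeff_comp_add_right {T : ℝ} [Fact (0 < T)] {E : Type*} [NormedAddCommGroup E]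
    [NormedSpace ℂ E] (f : AddCircle T → E) (c : AddCircle T) (n : ℤ) :
    fourierCoeff (fun x => f (x + c)) n = fourier n c • fourierCoeff f n := by
  have hchar : (fun x => fourier (-n) x • f (x + c)) =
      fun x => fourier n c • fourier (-n) (x + c) • f (x + c) := by
    ext x
    rw [← mul_smul]
    congr 1
    simp only [fourier_apply, ← Circle.coe_mul, ← AddCircle.toCircle_add, smul_add]
    congr 2
    simp only [neg_smul]
    abel
  rw [fourierCoeff, hchar, integral_smul,
    integral_add_right_eq_self (fun x => fourier (-n) x • f x) c]
  rfl

def translateL2 (c : AddCircle (1 : ℝ)) (g : PL2) : PL2 :=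
  Lp.compMeasurePreserving (· + c) (measurePreserving_add_right AddCircle.haarAddCircle c) g

theorem coeFn_translateL2 (c : AddCircle (1 : ℝ)) (g : PL2) :
    translateL2 c g =ᵐ[AddCircle.haarAddCircle] fun x => g (x + c) :=
  Lp.coeFn_compMeasurePreserving g _

theorem fCoeff_translateL2 (c : AddCircle (1 : ℝ)) (g : PL2) (n : ℤ) :
    fCoeff (translateL2 c g) n = fourier n c * fCoeff g n := by
  rw [fCoeff, fourierCoeff_congr_ae (coeFn_translateL2 c g), fourierCoeff_comp_add_right]
  rfl

theorem inner_fourierBasis_left (f : PL2) (n : ℤ) : ⟪fourierBasis n, f⟫_ℂ = fCoeff f n := by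
  rw [← fourierBasis.repr_apply_apply, fourierBasis_repr]
  rfl

def dyadicPoint (j : ℕ) (k : ℤ) : AddCircle (1 : ℝ) := ((2 : ℝ) ^ (-(j : ℤ)) * k : ℝ)

theorem shiftInner_eq_inner (f g : PL2) (j : ℕ) (k : ℤ) :
    shiftInner f g j k = ⟪translateL2 (dyadicPoint j k) g, f⟫_ℂ := by
  rw [L2.inner_def, shiftInner]
  refine integral_congr_ae ?_
  filter_upwards [coeFn_translateL2 (dyadicPoint j k) g] with x hx
  rw [RCLike.inner_apply, hx]
  rfl

theorem fourier_dyadicPoint (d : ℤ) (j : ℕ) (k : ℤ) :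
    fourier d (dyadicPoint j k) = (exp (2 * π * I / (2 ^ j : ℕ)) ^ d) ^ k := by
  rw [dyadicPoint, fourier_coe_apply, ← zpow_mul, ← exp_int_mul]
  congr 1
  push_cast [zpow_neg, zpow_natCast]
  field_simp

theorem Rset_eq_Ico (j : ℕ) : ∃ a : ℤ, Rset j = Ico a (a + (2 ^ j : ℕ)) := by
  cases j with
  | zero => exact ⟨0, rfl⟩
  | succ j =>
    refine ⟨-2 ^ j + 1, ?_⟩
    ext k
    simp only [Rset, Nat.add_one_sub_one, if_neg (Nat.succ_ne_zero j), mem_Icc, mem_Ico]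
    push_cast [pow_succ]
    omega

theorem card_Rset (j : ℕ) : #(Rset j) = 2 ^ j := by
  obtain ⟨a, ha⟩ := Rset_eq_Ico j
  rw [ha, Int.card_Ico, add_sub_cancel_left, Int.toNat_natCast]

theorem sum_Ico_zpow_of_pow_eq_one {K : Type*} [Field K] [DecidableEq K] {u : K} {N : ℕ}
    (hu : u ^ N = 1) (a : ℤ) : ∑ k ∈ Ico a (a + N), u ^ k = if u = 1 then (N : K) else 0 := by
  split_ifs with h1
  · simp [h1]
  rcases N.eq_zero_or_pos with rfl | hN
  · simp
  have hu0 : u ≠ 0 := by rintro rfl; simp [zero_pow hN.ne'] at hu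
  rw [Int.Ico_eq_finset_map, sum_map]
  simp [zpow_add₀ hu0, ← mul_sum, geom_sum_eq h1, hu]

theorem sum_fourier_dyadicPoint (j : ℕ) (d : ℤ) :
    ∑ k ∈ Rset j, (fourier d (dyadicPoint j k) : ℂ) = if (2 ^ j : ℤ) ∣ d then 2 ^ j else 0 := by
  have hζ := isPrimitiveRoot_exp (2 ^ j) (by positivity)
  have hu : (exp (2 * π * I / (2 ^ j : ℕ)) ^ d) ^ (2 ^ j) = 1 := by
    rw [← zpow_natCast, ← zpow_mul, mul_comm d, zpow_mul, zpow_natCast, hζ.pow_eq_one, one_zpow]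
  obtain ⟨a, ha⟩ := Rset_eq_Ico j
  simp_rw [ha, fourier_dyadicPoint, sum_Ico_zpow_of_pow_eq_one hu, hζ.zpow_eq_one_iff_dvd]
  push_cast
  rfl

abbrev FrameIndex (ρ : ℕ → ℕ) : Type := Σ j : ℕ, Icc 1 (ρ j) × Rset j

def frameVec (ρ : ℕ → ℕ) (ψ : ℕ → ℕ → PL2) (i : FrameIndex ρ) : PL2 :=
  translateL2 (dyadicPoint i.1 i.2.2) (ψ i.1 i.2.1)

def gramFiber (ρ : ℕ → ℕ) (ψ : ℕ → ℕ → PL2) (n n' : ℤ) (j : ℕ) : ℂ :=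
  if (2 ^ j : ℤ) ∣ n - n' then
    2 ^ j * ∑ m ∈ Icc 1 (ρ j), conj (fCoeff (ψ j m) n') * fCoeff (ψ j m) n
  else 0

section Frame

variable (ρ : ℕ → ℕ) (ψ : ℕ → ℕ → PL2)

theorem isParsevalFrame_iff_hasSum :
    IsParsevalFrame ρ ψ ↔ ∀ f, HasSum (fun i => ‖⟪frameVec ρ ψ i, f⟫_ℂ‖ ^ 2) (‖f‖ ^ 2) := by
  have hfiber : ∀ f j, ∑ m ∈ Icc 1 (ρ j), ∑ k ∈ Rset j, ‖shiftInner f (ψ j m) j k‖ ^ 2 =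
      ∑ x : Icc 1 (ρ j) × Rset j, ‖⟪frameVec ρ ψ ⟨j, x⟩, f⟫_ℂ‖ ^ 2 := fun f j => by
    simp only [frameVec, ← shiftInner_eq_inner]
    exact (sum_coe_sort_prod _ _ fun m k => ‖shiftInner f (ψ j m) j k‖ ^ 2).symm
  simp_rw [IsParsevalFrame, hfiber, hasSum_sigma_iff_of_nonneg (fun _ => sq_nonneg _)]
  refine forall_congr' fun f => ⟨fun h => ?_, fun h => h.tsum_eq.symm⟩
  by_cases hs : Summable fun j => ∑ x : Icc 1 (ρ j) × Rset j, ‖⟪frameVec ρ ψ ⟨j, x⟩, f⟫_ℂ‖ ^ 2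
  · exact h ▸ hs.hasSum
  have hf : f = 0 := by simpa [tsum_eq_zero_of_not_summable hs] using h
  simp [hf]

theorem inner_frameVec_fourierBasis (i : FrameIndex ρ) (n : ℤ) :
    ⟪frameVec ρ ψ i, fourierBasis n⟫_ℂ =
      conj (fourier n (dyadicPoint i.1 i.2.2) * fCoeff (ψ i.1 i.2.1) n) := by
  rw [← inner_conj_symm, inner_fourierBasis_left, frameVec, fCoeff_translateL2]

theorem sum_norm_sq_inner_frameVec (n : ℤ) (j : ℕ) :
    ∑ x : Icc 1 (ρ j) × Rset j, ‖⟪frameVec ρ ψ ⟨j, x⟩, fourierBasis n⟫_ℂ‖ ^ 2 =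
      ∑ m ∈ Icc 1 (ρ j), 2 ^ j * ‖fCoeff (ψ j m) n‖ ^ 2 := by
  simp only [inner_frameVec_fourierBasis, norm_conj, norm_mul, fourier_apply, Circle.norm_coe,
    one_mul]
  rw [sum_coe_sort_prod _ _ (fun m _ => ‖fCoeff (ψ j m) n‖ ^ 2)]
  simp [card_Rset]

theorem sum_inner_mul_inner_frameVec (n n' : ℤ) (j : ℕ) :
    ∑ x : Icc 1 (ρ j) × Rset j,
      ⟪fourierBasis n, frameVec ρ ψ ⟨j, x⟩⟫_ℂ * ⟪frameVec ρ ψ ⟨j, x⟩, fourierBasis n'⟫_ℂ =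
      gramFiber ρ ψ n n' j := by
  have hterm : ∀ x : Icc 1 (ρ j) × Rset j,
      ⟪fourierBasis n, frameVec ρ ψ ⟨j, x⟩⟫_ℂ * ⟪frameVec ρ ψ ⟨j, x⟩, fourierBasis n'⟫_ℂ =
        fourier (n - n') (dyadicPoint j x.2) *
          (conj (fCoeff (ψ j x.1) n') * fCoeff (ψ j x.1) n) := by
    intro x
    rw [← inner_conj_symm (fourierBasis n), inner_frameVec_fourierBasis,
      inner_frameVec_fourierBasis, sub_eq_add_neg, fourier_add, fourier_neg]
    simp only [conj_conj, map_mul]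
    ring
  rw [sum_congr rfl fun x _ => hterm x,
    sum_coe_sort_prod _ _ (fun m k => fourier (n - n') (dyadicPoint j k) *
      (conj (fCoeff (ψ j m) n') * fCoeff (ψ j m) n))]
  simp_rw [← sum_mul, sum_fourier_dyadicPoint, gramFiber, ite_mul, zero_mul, mul_sum, sum_ite_irrel,
    sum_const_zero]

theorem gramFiber_self (n : ℤ) (j : ℕ) :
    gramFiber ρ ψ n n j = ((∑ m ∈ Icc 1 (ρ j), 2 ^ j * ‖fCoeff (ψ j m) n‖ ^ 2 : ℝ) : ℂ) := by
  simp [gramFiber, conj_mul', mul_sum]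

theorem summable_norm_sq_inner_frameVec {n : ℤ} (h : ∑' j, gramFiber ρ ψ n n j = 1) :
    Summable fun i => ‖⟪frameVec ρ ψ i, fourierBasis n⟫_ℂ‖ ^ 2 := by
  refine (summable_sigma_of_nonneg fun _ => sq_nonneg _).2 ⟨fun _ => .of_finite, ?_⟩
  simp_rw [tsum_fintype, sum_norm_sq_inner_frameVec]
  by_contra hs
  simp_rw [gramFiber_self, ← ofReal_tsum, tsum_eq_zero_of_not_summable hs] at h
  simp at h

theorem hasSum_inner_mul_inner_frameVec_iff {n n' : ℤ}
    (hs : Summable fun i =>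
      ⟪fourierBasis n, frameVec ρ ψ i⟫_ℂ * ⟪frameVec ρ ψ i, fourierBasis n'⟫_ℂ) {a : ℂ} :
    HasSum (fun i => ⟪fourierBasis n, frameVec ρ ψ i⟫_ℂ * ⟪frameVec ρ ψ i, fourierBasis n'⟫_ℂ) a ↔
      ∑' j, gramFiber ρ ψ n n' j = a := by
  simp_rw [hs.hasSum_iff_tsum_sum_sigma, sum_inner_mul_inner_frameVec]

theorem hasSum_gram_iff_tsum_gramFiber :
    (∀ n n', HasSum
      (fun i => ⟪fourierBasis n, frameVec ρ ψ i⟫_ℂ * ⟪frameVec ρ ψ i, fourierBasis n'⟫_ℂ)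
      (if n = n' then 1 else 0)) ↔
      ∀ n n', ∑' j, gramFiber ρ ψ n n' j = if n = n' then 1 else 0 := by
  refine ⟨fun h n n' => (hasSum_inner_mul_inner_frameVec_iff ρ ψ (h n n').summable).1 (h n n'),
    fun h n n' => (hasSum_inner_mul_inner_frameVec_iff ρ ψ ?_).2 (h n n')⟩
  have hn := summable_norm_sq_inner_frameVec ρ ψ (by simpa using h n n)
  have hn' := summable_norm_sq_inner_frameVec ρ ψ (by simpa using h n' n')
  exact summable_mul_of_summable_norm_sq (by simpa only [norm_inner_symm] using hn) hn'

theorem tsum_gramFiber_two_pow_mul_odd_add {k : ℤ} (hk : Odd k) (n : ℤ) (j : ℕ) :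
    ∑' q, gramFiber ρ ψ (2 ^ j * k + n) n q =
      ∑ q ∈ range (j + 1), (2 : ℂ) ^ q *
        ∑ m ∈ Icc 1 (ρ q), conj (fCoeff (ψ q m) n) * fCoeff (ψ q m) (2 ^ j * k + n) := by
  simp_rw [gramFiber, add_sub_cancel_right, Int.two_pow_dvd_two_pow_mul_odd_iff hk]
  rw [tsum_eq_sum (s := range (j + 1)) fun q hq => if_neg (by simpa using hq)]
  exact sum_congr rfl fun q hq => if_pos (by simpa [Nat.lt_succ_iff] using hq)

theorem tsum_gramFiber_iff :
    (∀ n n', ∑' j, gramFiber ρ ψ n n' j = if n = n' then 1 else 0) ↔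
      ((∀ n : ℤ, ∑' j : ℕ, ∑ m ∈ Icc 1 (ρ j), (2 : ℝ) ^ j * ‖fCoeff (ψ j m) n‖ ^ 2 = 1) ∧
       (∀ k : ℤ, Odd k → ∀ n : ℤ, ∀ j : ℕ,
          ∑ q ∈ range (j + 1), (2 : ℂ) ^ q *
            ∑ m ∈ Icc 1 (ρ q), conj (fCoeff (ψ q m) n) * fCoeff (ψ q m) (2 ^ j * k + n) = 0)) := by
  have hdiag : ∀ n, ∑' j, gramFiber ρ ψ n n j = 1 ↔
      ∑' j : ℕ, ∑ m ∈ Icc 1 (ρ j), (2 : ℝ) ^ j * ‖fCoeff (ψ j m) n‖ ^ 2 = 1 := fun n => by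
    simp_rw [gramFiber_self, ← ofReal_tsum, ofReal_eq_one]
  refine ⟨fun h => ⟨fun n => (hdiag n).1 (by simpa using h n n), fun k hk n j => ?_⟩,
    fun ⟨h1, h2⟩ n n' => ?_⟩
  · have hne : 2 ^ j * k + n ≠ n := by simpa using (show k ≠ 0 by rintro rfl; simp at hk)
    rw [← tsum_gramFiber_two_pow_mul_odd_add ρ ψ hk, h, if_neg hne]
  · split_ifs with hnn
    · exact hnn ▸ (hdiag n).2 (h1 n)
    obtain ⟨j, k, hk, hd⟩ := Int.exists_eq_two_pow_mul_odd (sub_ne_zero.2 hnn)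
    rw [eq_add_of_sub_eq hd, tsum_gramFiber_two_pow_mul_odd_add ρ ψ hk, h2 k hk]

end Frame

theorem parseval_frame_characterization_general
    (ρ : ℕ → ℕ) (ψ : ℕ → ℕ → PL2) :
    IsParsevalFrame ρ ψ ↔
      ((∀ n : ℤ,
          ∑' j : ℕ, ∑ m ∈ Finset.Icc 1 (ρ j),
            (2:ℝ)^j * (‖fCoeff (ψ j m) n‖)^2 = 1) ∧
       (∀ k : ℤ, Odd k → ∀ n : ℤ, ∀ j : ℕ,
          ∑ q ∈ Finset.range (j+1), (2:ℂ)^q *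
            ∑ m ∈ Finset.Icc 1 (ρ q),
              conj (fCoeff (ψ q m) n) * fCoeff (ψ q m) (2^j * k + n) = 0)) := by
  rw [isParsevalFrame_iff_hasSum, hasSum_norm_sq_inner_iff fourierBasis,
    hasSum_gram_iff_tsum_gramFiber, tsum_gramFiber_iff]

theorem parseval_frame_characterization
    (ρ : ℕ → ℕ) (hρ : ∀ j, 0 < ρ j) (ψ : ℕ → ℕ → PL2) :
    IsParsevalFrame ρ ψ ↔
      ((∀ n : ℤ,
          ∑' j : ℕ, ∑ m ∈ Finset.Icc 1 (ρ j),
            (2:ℝ)^j * (‖fCoeff (ψ j m) n‖)^2 = 1) ∧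
       (∀ k : ℤ, Odd k → ∀ n : ℤ, ∀ j : ℕ,
          ∑ q ∈ Finset.range (j+1), (2:ℂ)^q *
            ∑ m ∈ Finset.Icc 1 (ρ q),
              conj (fCoeff (ψ q m) n) * fCoeff (ψ q m) (2^j * k + n) = 0)) :=
  parseval_frame_characterization_general ρ ψ

end
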